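/- Let 1 < α ≤ 2 and ψ(x) = (x − ⌊x⌋) − (x − ⌊x⌋)². Then ∫_0^∞ ψ(x) / x^{2 − 1/α} dx ≥ α³ / (2(α−1)(2α+1)). -/

import Mathlib

/-!
On `(0, 1]` we have `psi x = x - x ^ 2`, so with `s = 2 - 1/α` that part of the integral is
exactly `1/(2-s) - 1/(3-s)`. On `[1, ∞)` the mean value theorem gives
`x ^ (-s) ≥ (x ^ (1-s) - (x+1) ^ (1-s)) / (s-1)`, and since `psi` has period `1` the integral of
`psi x * (x ^ (1-s) - (x+1) ^ (1-s))` over `[1, b]` telescopes to the integrals of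
`psi x * x ^ (1-s)` over `[1, 2]` (at least `2 ^ (1-s) / 6`) and over `[b, b+1]` (tending to `0`).
Bernoulli's inequality `2 ^ (s-1) ≤ s` then leaves a rational inequality in `α`.
-/

open MeasureTheory Real

noncomputable def psi (x : ℝ) : ℝ := (x - ⌊x⌋) - (x - ⌊x⌋) ^ 2

open Set Filter Topology intervalIntegral

lemma psi_eq_fract (x : ℝ) : psi x = Int.fract x - Int.fract x ^ 2 := by
  rw [psi, Int.self_sub_floor]

lemma psi_periodic : Function.Periodic psi 1 := fun x => by
  simp only [psi_eq_fract, Int.fract_add_one]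

lemma continuous_psi : Continuous psi := by
  rw [show psi = (fun t => t - t ^ 2) ∘ Int.fract from funext psi_eq_fract]
  exact (continuous_id.sub (continuous_pow 2)).continuousOn.comp_fract'' (by norm_num)

lemma psi_nonneg (x : ℝ) : 0 ≤ psi x := by
  rw [psi_eq_fract]
  nlinarith [Int.fract_nonneg x, Int.fract_lt_one x]

lemma psi_le_one_div_four (x : ℝ) : psi x ≤ 1 / 4 := by
  rw [psi_eq_fract]
  nlinarith [sq_nonneg (Int.fract x - 1 / 2)]

lemma psi_eq_of_mem_Icc {x : ℝ} (hx : x ∈ Icc 0 1) : psi x = x - x ^ 2 := by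
  rcases hx.2.lt_or_eq with hx1 | rfl
  · rw [psi_eq_fract, Int.fract_eq_self.mpr ⟨hx.1, hx1⟩]
  · norm_num [psi_eq_fract]

lemma integral_psi_zero_one : ∫ x in (0 : ℝ)..1, psi x = 1 / 6 := by
  rw [integral_congr fun x hx => psi_eq_of_mem_Icc (uIcc_of_le (zero_le_one' ℝ) ▸ hx),
    integral_sub intervalIntegrable_id (intervalIntegrable_pow 2), integral_id, integral_pow]
  norm_num

lemma rpow_sub_rpow_add_one_le {s x : ℝ} (hs : 1 ≤ s) (hx : 0 < x) :
    x ^ (1 - s) - (x + 1) ^ (1 - s) ≤ (s - 1) / x ^ s := by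
  obtain ⟨c, hc, hslope⟩ := exists_hasDerivAt_eq_slope (fun t => -t ^ (1 - s))
    (fun t => (s - 1) / t ^ s) (lt_add_one x)
    (fun t ht =>
      ((continuousAt_rpow_const _ _ (Or.inl (hx.trans_le ht.1).ne')).neg).continuousWithinAt)
    (fun t ht => by
      have ht0 : 0 < t := hx.trans ht.1
      refine (hasDerivAt_rpow_const (p := 1 - s) (Or.inl ht0.ne')).neg.congr_deriv ?_
      rw [show 1 - s - 1 = -s by ring, rpow_neg ht0.le]; ring)
  calc x ^ (1 - s) - (x + 1) ^ (1 - s) = (s - 1) / c ^ s := by rw [hslope]; ring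
    _ ≤ (s - 1) / x ^ s := by
      gcongr
      exact hc.1.le

lemma intervalIntegrable_of_continuousOn_Ioi {f : ℝ → ℝ} {c a b : ℝ}
    (hf : ContinuousOn f (Ioi c)) (ha : c < a) (hb : c < b) : IntervalIntegrable f volume a b :=
  (hf.mono fun _ hx => (lt_min ha hb).trans_le hx.1).intervalIntegrable

lemma continuousOn_psi_mul_rpow (r : ℝ) : ContinuousOn (fun x => psi x * x ^ r) (Ioi 0) :=
  continuous_psi.continuousOn.mul (continuousOn_id.rpow_const fun _ hx => Or.inl (ne_of_gt hx))

lemma continuousOn_psi_div_rpow (s : ℝ) : ContinuousOn (fun x => psi x / x ^ s) (Ioi 0) :=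
  continuous_psi.continuousOn.div (continuousOn_id.rpow_const fun _ hx => Or.inl (ne_of_gt hx))
    fun _ hx => (rpow_pos_of_pos hx s).ne'

lemma integral_sub_comp_add_right {F : ℝ → ℝ} {a b c : ℝ} (hab : a ≤ b) (hc : 0 ≤ c)
    (hF : ContinuousOn F (Ici a)) :
    ∫ x in a..b, (F x - F (x + c)) = (∫ x in a..a + c, F x) - ∫ x in b..b + c, F x := by
  have hint : ∀ u v, a ≤ u → a ≤ v → IntervalIntegrable F volume u v := fun u v hu hv =>
    (hF.mono fun x hx => (le_inf hu hv).trans hx.1).intervalIntegrable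
  have hshift : ContinuousOn (fun x => F (x + c)) (Ici a) :=
    hF.comp (continuous_add_const c).continuousOn fun x hx => by simp only [mem_Ici] at *; linarith
  rw [integral_sub (hint a b le_rfl hab)
      ((hshift.mono fun x hx => (le_inf le_rfl hab).trans hx.1).intervalIntegrable),
    integral_comp_add_right F c, integral_interval_sub_interval_comm (hint a b le_rfl hab)
      (hint _ _ (by linarith) (by linarith)) (hint _ _ le_rfl (by linarith))]

lemma eqOn_psi_div_rpow {s : ℝ} :
    EqOn (fun x => psi x / x ^ s) (fun x => x ^ (1 - s) - x ^ (2 - s)) (Ioc 0 1) := by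
  intro x hx
  dsimp only
  rw [psi_eq_of_mem_Icc (Ioc_subset_Icc_self hx), div_eq_iff (rpow_pos_of_pos hx.1 s).ne', sub_mul,
    ← rpow_add hx.1, ← rpow_add hx.1, sub_add_cancel, sub_add_cancel, rpow_one, rpow_two]

lemma integrableOn_psi_div_rpow_Ioc {s : ℝ} (hs : s < 2) :
    IntegrableOn (fun x => psi x / x ^ s) (Ioc 0 1) := by
  refine IntegrableOn.congr_fun ?_ eqOn_psi_div_rpow.symm measurableSet_Ioc
  exact ((intervalIntegrable_rpow' (by linarith)).sub (intervalIntegrable_rpow' (by linarith))).1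

lemma integral_psi_div_rpow_zero_one {s : ℝ} (hs : s < 2) :
    ∫ x in (0 : ℝ)..1, psi x / x ^ s = 1 / (2 - s) - 1 / (3 - s) := by
  rw [integral_of_le zero_le_one, setIntegral_congr_fun measurableSet_Ioc eqOn_psi_div_rpow,
    ← integral_of_le zero_le_one, integral_sub (intervalIntegrable_rpow' (by linarith))
      (intervalIntegrable_rpow' (by linarith)),
    integral_rpow (Or.inl (by linarith)), integral_rpow (Or.inl (by linarith))]
  rw [one_rpow, one_rpow, zero_rpow (by linarith), zero_rpow (by linarith)]
  ring_nf

lemma integrableOn_psi_div_rpow_Ioi {s : ℝ} (hs : 1 < s) :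
    IntegrableOn (fun x => psi x / x ^ s) (Ioi 1) := by
  refine Integrable.mono'
    ((integrableOn_Ioi_rpow_of_lt (by linarith : -s < -1) one_pos).const_mul (1 / 4))
    (continuous_psi.measurable.div (measurable_id.pow_const s)).aestronglyMeasurable ?_
  filter_upwards [ae_restrict_mem measurableSet_Ioi] with x hx
  have hxs : 0 < x ^ s := rpow_pos_of_pos (one_pos.trans hx) s
  rw [norm_of_nonneg (div_nonneg (psi_nonneg x) hxs.le), rpow_neg (one_pos.trans hx).le,
    div_eq_mul_inv]
  gcongr
  exact psi_le_one_div_four x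

lemma integral_psi_mul_rpow_sub_rpow_add_one {s b : ℝ} (hb : 1 ≤ b) :
    ∫ x in (1 : ℝ)..b, psi x * (x ^ (1 - s) - (x + 1) ^ (1 - s))
      = (∫ x in (1 : ℝ)..2, psi x * x ^ (1 - s)) - ∫ x in b..b + 1, psi x * x ^ (1 - s) := by
  rw [← one_add_one_eq_two, ← integral_sub_comp_add_right hb zero_le_one
    ((continuousOn_psi_mul_rpow _).mono (Ici_subset_Ioi.mpr one_pos))]
  simp only [psi_periodic _, mul_sub]

lemma le_integral_psi_mul_rpow_one_two {s : ℝ} (hs : 1 ≤ s) :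
    2 ^ (1 - s) / 6 ≤ ∫ x in (1 : ℝ)..2, psi x * x ^ (1 - s) := by
  have hpsi : ∫ x in (1 : ℝ)..2, psi x = 1 / 6 := by
    rw [← integral_psi_zero_one, ← one_add_one_eq_two, psi_periodic.intervalIntegral_add_eq 1 0,
      zero_add]
  calc 2 ^ (1 - s) / 6 = ∫ x in (1 : ℝ)..2, psi x * 2 ^ (1 - s) := by
        rw [intervalIntegral.integral_mul_const, hpsi]; ring
    _ ≤ ∫ x in (1 : ℝ)..2, psi x * x ^ (1 - s) := by
      refine integral_mono_on one_le_two
        ((continuous_psi.mul continuous_const).intervalIntegrable 1 2)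
        (intervalIntegrable_of_continuousOn_Ioi (continuousOn_psi_mul_rpow _) one_pos two_pos)
        fun x hx => mul_le_mul_of_nonneg_left ?_ (psi_nonneg x)
      exact rpow_le_rpow_of_nonpos (one_pos.trans_le hx.1) hx.2 (by linarith)

lemma integral_psi_mul_rpow_le {s b : ℝ} (hs : 1 ≤ s) (hb : 0 < b) :
    ∫ x in b..b + 1, psi x * x ^ (1 - s) ≤ b ^ (1 - s) / 4 := by
  calc ∫ x in b..b + 1, psi x * x ^ (1 - s) ≤ ∫ x in b..b + 1, b ^ (1 - s) / 4 := by
        refine integral_mono_on (by linarith) (intervalIntegrable_of_continuousOn_Ioi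
          (continuousOn_psi_mul_rpow _) hb (by linarith)) intervalIntegrable_const fun x hx => ?_
        have hx0 : 0 < x := hb.trans_le hx.1
        have := mul_le_mul (psi_le_one_div_four x)
          (rpow_le_rpow_of_nonpos hb hx.1 (by linarith : 1 - s ≤ 0))
          (rpow_nonneg hx0.le _) (by norm_num)
        linarith
    _ = b ^ (1 - s) / 4 := by simp

lemma le_integral_psi_div_rpow_one {s b : ℝ} (hs : 1 < s) (hb : 1 ≤ b) :
    (2 ^ (1 - s) / 6 - b ^ (1 - s) / 4) / (s - 1) ≤ ∫ x in (1 : ℝ)..b, psi x / x ^ s := by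
  calc (2 ^ (1 - s) / 6 - b ^ (1 - s) / 4) / (s - 1)
      ≤ (∫ x in (1 : ℝ)..b, psi x * (x ^ (1 - s) - (x + 1) ^ (1 - s))) / (s - 1) := by
        rw [integral_psi_mul_rpow_sub_rpow_add_one hb]
        refine div_le_div_of_nonneg_right ?_ (by linarith)
        linarith [le_integral_psi_mul_rpow_one_two hs.le,
          integral_psi_mul_rpow_le hs.le (by linarith : (0 : ℝ) < b)]
    _ = ∫ x in (1 : ℝ)..b, psi x * (x ^ (1 - s) - (x + 1) ^ (1 - s)) / (s - 1) :=
        (intervalIntegral.integral_div _ _).symm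
    _ ≤ ∫ x in (1 : ℝ)..b, psi x / x ^ s := by
        refine integral_mono_on hb ?_ (intervalIntegrable_of_continuousOn_Ioi
          (continuousOn_psi_div_rpow s) one_pos (by linarith)) fun x hx => ?_
        · refine intervalIntegrable_of_continuousOn_Ioi ?_ one_pos (by linarith : (0 : ℝ) < b)
          exact (continuous_psi.continuousOn.mul ((continuousOn_id.rpow_const fun x hx =>
            Or.inl (ne_of_gt hx)).sub ((continuousOn_id.add continuousOn_const).rpow_const
              fun x hx => Or.inl (add_pos (mem_Ioi.mp hx) one_pos).ne'))).div_const _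
        · have hx0 : 0 < x := one_pos.trans_le hx.1
          rw [mul_div_assoc, div_eq_mul_one_div (psi x)]
          refine mul_le_mul_of_nonneg_left ?_ (psi_nonneg x)
          rw [div_le_iff₀ (by linarith), one_div_mul_eq_div]
          exact rpow_sub_rpow_add_one_le hs.le hx0

lemma le_integral_Ioi_one_psi_div_rpow {s : ℝ} (hs : 1 < s) :
    2 ^ (1 - s) / (6 * (s - 1)) ≤ ∫ x in Ioi 1, psi x / x ^ s := by
  have hpow : Tendsto (fun b : ℝ => b ^ (1 - s)) atTop (𝓝 0) := by
    simpa only [neg_sub] using tendsto_rpow_neg_atTop (sub_pos.mpr hs)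
  have hlim :=
    ((tendsto_const_nhds (x := 2 ^ (1 - s) / 6)).sub (hpow.div_const 4)).div_const (s - 1)
  rw [zero_div, sub_zero, div_div] at hlim
  exact le_of_tendsto_of_tendsto hlim (intervalIntegral_tendsto_integral_Ioi 1
    (integrableOn_psi_div_rpow_Ioi hs) tendsto_id)
    ((eventually_ge_atTop 1).mono fun b hb => le_integral_psi_div_rpow_one hs hb)

lemma le_integral_Ioi_zero_psi_div_rpow {s : ℝ} (h1 : 1 < s) (h2 : s < 2) :
    1 / (2 - s) - 1 / (3 - s) + 2 ^ (1 - s) / (6 * (s - 1)) ≤ ∫ x in Ioi 0, psi x / x ^ s := by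
  rw [← integral_interval_add_Ioi'
    ((intervalIntegrable_iff_integrableOn_Ioc_of_le zero_le_one).mpr
      (integrableOn_psi_div_rpow_Ioc h2)) (integrableOn_psi_div_rpow_Ioi h1),
    integral_psi_div_rpow_zero_one h2]
  gcongr
  exact le_integral_Ioi_one_psi_div_rpow h1

lemma one_div_le_two_rpow_one_sub {s : ℝ} (h1 : 1 ≤ s) (h2 : s ≤ 2) :
    1 / s ≤ 2 ^ (1 - s) := by
  have hbernoulli : (2 : ℝ) ^ (s - 1) ≤ s := by
    have := rpow_one_add_le_one_add_mul_self (s := 1) (by norm_num) (sub_nonneg.mpr h1)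
      (by linarith : s - 1 ≤ 1)
    norm_num at this
    linarith
  rw [← neg_sub, rpow_neg zero_le_two, ← one_div]
  exact one_div_le_one_div_of_le (by positivity) hbernoulli

lemma pow_three_div_le_of_one_lt {α : ℝ} (hα : 1 < α) :
    α ^ 3 / (2 * (α - 1) * (2 * α + 1)) ≤
      1 / (2 - (2 - 1/α)) - 1 / (3 - (2 - 1/α)) + 1 / (2 - 1/α) / (6 * ((2 - 1/α) - 1)) := by
  have h0 : 0 < α - 1 := by linarith
  have h1 : 0 < 2 * α - 1 := by linarith
  have hrhs : 1 / (2 - (2 - 1/α)) - 1 / (3 - (2 - 1/α)) + 1 / (2 - 1/α) / (6 * ((2 - 1/α) - 1))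
      = α ^ 2 / (α + 1) + α ^ 2 / (6 * (α - 1) * (2 * α - 1)) := by
    have : α ≠ 0 := by positivity
    rw [show 2 - (2 - 1/α) = 1/α by ring, show 3 - (2 - 1/α) = (α + 1)/α by field_simp; ring,
      show 2 - 1/α = (2 * α - 1)/α by field_simp,
      show (2 * α - 1)/α - 1 = (α - 1)/α by field_simp; ring]
    field_simp
    ring
  rw [hrhs, div_add_div _ _ (by positivity) (by positivity),
    div_le_div_iff₀ (by positivity) (by positivity)]
  -- the difference of the two sides is `2 α² (α - 1)² (18 α² - 7 α - 7)`
  nlinarith [mul_pos (mul_pos (pow_pos (by linarith : 0 < α) 2) (pow_pos h0 2))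
    (show 0 < 18 * α ^ 2 - 7 * α - 7 by nlinarith)]

theorem stmt15_general (α : ℝ) (hα1 : 1 < α) :
    α ^ 3 / (2 * (α - 1) * (2 * α + 1)) ≤ ∫ x in Set.Ioi (0:ℝ), psi x / x ^ (2 - 1/α) := by
  have hα0 : 0 < α := by linarith
  have hs1 : 1 < 2 - 1 / α := by have : 1 / α < 1 := (div_lt_one hα0).mpr hα1; linarith
  have hs2 : 2 - 1 / α < 2 := by linarith [one_div_pos.mpr hα0]
  calc α ^ 3 / (2 * (α - 1) * (2 * α + 1))
      ≤ 1 / (2 - (2 - 1/α)) - 1 / (3 - (2 - 1/α)) + 1 / (2 - 1/α) / (6 * ((2 - 1/α) - 1)) :=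
        pow_three_div_le_of_one_lt hα1
    _ ≤ 1 / (2 - (2 - 1/α)) - 1 / (3 - (2 - 1/α))
          + 2 ^ (1 - (2 - 1/α)) / (6 * ((2 - 1/α) - 1)) := by
        gcongr
        exact one_div_le_two_rpow_one_sub hs1.le hs2.le
    _ ≤ ∫ x in Ioi 0, psi x / x ^ (2 - 1/α) := le_integral_Ioi_zero_psi_div_rpow hs1 hs2

theorem stmt15 (α : ℝ) (hα1 : 1 < α) (hα2 : α ≤ 2) :
    α ^ 3 / (2 * (α - 1) * (2 * α + 1)) ≤ ∫ x in Set.Ioi (0:ℝ), psi x / x ^ (2 - 1/α) :=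
  stmt15_general α hα1
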